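/- arXiv:1511.07957 — 5 statements merged into one kernel-verified Lean document; each statement's English description precedes it below -/
import Mathlib

section
/- Let L ≥ 1 and for x ∈ ℝ define the L-periodic mollified distance d_L(x,0) = d_max − ( [ d_max − ( d̃_L(x,0)² + 1 )^{1/2} ]² + 1 )^{1/2}, where d̃_L(x,0) = min_{k∈ℤ} |x − Lk| and d_max = (L²/4 + 1)^{1/2}. Then the function x ↦ d_L(x,0) is twice continuously differentiable on ℝ, its first derivative satisfies |∂_x d_L(x,0)| ≤ 1 for all x, and its second derivative satisfies |∂²_x d_L(x,0)| ≤ 2 for all x; in particular both derivative bounds are independent of L. -/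
open scoped BigOperators Real
open MeasureTheory

noncomputable section

/-- The periodic distance `min_{k ∈ ℤ} |x - L k|`. -/
def dtilde (L x : ℝ) : ℝ := sInf {r : ℝ | ∃ k : ℤ, r = |x - L * k|}

/-- The mollified periodic distance `d_L(x, 0)`. -/
def dmol (L x : ℝ) : ℝ :=
  Real.sqrt (L ^ 2 / 4 + 1) -
    Real.sqrt ((Real.sqrt (L ^ 2 / 4 + 1) - Real.sqrt (dtilde L x ^ 2 + 1)) ^ 2 + 1)

/-- The mollified periodic distance `d_L(x, y)`. -/
def dL (L x y : ℝ) : ℝ := dmol L (x - y)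

/-- The grid point `x_i = i Δx`, with `Δx = L / N`. -/
def gridX (L : ℝ) (N : ℕ) (i : ZMod N) : ℝ := (ZMod.val i : ℝ) * (L / N)

/-- Forward difference operator on periodic lattice functions. -/
def Dplus {N : ℕ} (dx : ℝ) (f : ZMod N → ℂ) : ZMod N → ℂ :=
  fun i => (f (i + 1) - f i) / (dx : ℂ)

/-- Backward difference operator on periodic lattice functions. -/
def Dminus {N : ℕ} (dx : ℝ) (f : ZMod N → ℂ) : ZMod N → ℂ :=
  fun i => (f i - f (i - 1)) / (dx : ℂ)

/-- Second order finite difference Laplacian `Δ = 𝒟⁺𝒟⁻`. -/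
def discLap {N : ℕ} (dx : ℝ) (f : ZMod N → ℂ) : ZMod N → ℂ :=
  Dplus dx (Dminus dx f)

/-- Weighted `ℓ²` norm `(w Σ |f i|²)^{1/2}`; with `w = Δx` this is `‖·‖_{L²(𝒳)}`,
with `w = Δk` this is `‖·‖_{L²(𝒦)}`. -/
def wnorm {N : ℕ} [NeZero N] (w : ℝ) (f : ZMod N → ℂ) : ℝ :=
  Real.sqrt (w * ∑ i : ZMod N, ‖f i‖ ^ 2)

/-- The Fourier grid point `k = n Δk` with `n ∈ (-N/2, N/2]` corresponding to `j ∈ ZMod N`. -/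
def kval (L : ℝ) (N : ℕ) (j : ZMod N) : ℝ :=
  ((if (ZMod.val j : ℤ) ≤ (N : ℤ) / 2 then (ZMod.val j : ℤ) else (ZMod.val j : ℤ) - (N : ℤ)) : ℝ) *
    (2 * Real.pi / L)

/-- Discrete Fourier transform `f̂_k = Δx Σ_x e^{-i k x} f(x)`. -/
def dft (L : ℝ) {N : ℕ} [NeZero N] (f : ZMod N → ℂ) (j : ZMod N) : ℂ :=
  ((L / N : ℝ) : ℂ) *
    ∑ i : ZMod N, Complex.exp (-Complex.I * (kval L N j : ℂ) * ((gridX L N i : ℝ) : ℂ)) * f i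

/-- Inverse discrete Fourier transform `f(x) = (1/L) Σ_k e^{i k x} f̂_k`. -/
def idft (L : ℝ) {N : ℕ} [NeZero N] (fh : ZMod N → ℂ) (i : ZMod N) : ℂ :=
  ((1 / L : ℝ) : ℂ) *
    ∑ j : ZMod N, Complex.exp (Complex.I * (kval L N j : ℂ) * ((gridX L N i : ℝ) : ℂ)) * fh j

/-- Periodic difference operator on the Fourier grid, `(𝒟 f̂)_k = (f̂_k - f̂_{k-Δk})/Δk`. -/
def Dk {N : ℕ} (dk : ℝ) (fh : ZMod N → ℂ) : ZMod N → ℂ :=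
  fun j => (fh j - fh (j - 1)) / (dk : ℂ)

/-- Real-valued version of the periodic difference operator on the Fourier grid. -/
def DkR {N : ℕ} (dk : ℝ) (fh : ZMod N → ℝ) : ZMod N → ℝ :=
  fun j => (fh j - fh (j - 1)) / dk

/-- The distance `d(x,0)`: equal to `x` on `[0, L/2)` and `L - x` on `[L/2, L)`. -/
def dfun (L x : ℝ) : ℝ := if x < L / 2 then x else L - x

/-- The mollified symbol `ĥ_k = θ̂(k)(k² - k_c²) + k_c²` on the Fourier grid, `k_c = π N / L`. -/
def hsym (L : ℝ) (N : ℕ) (θ : ℝ → ℝ) (j : ZMod N) : ℝ :=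
  θ (kval L N j) * ((kval L N j) ^ 2 - (Real.pi * N / L) ^ 2) + (Real.pi * N / L) ^ 2

/-- The Fourier space Hamiltonian matrix `Ĥ_{kl} = ĥ_k δ_{kl} + (1/L) V̂_{k-l}`. -/
def Hmat (L : ℝ) {N : ℕ} [NeZero N] (hh : ZMod N → ℝ) (V : ZMod N → ℝ) :
    Matrix (ZMod N) (ZMod N) ℂ :=
  Matrix.of fun k l =>
    (if k = l then (hh k : ℂ) else 0) + ((1 / L : ℝ) : ℂ) * dft L (fun i => (V i : ℂ)) (k - l)

end

/-!
Write `⟨y⟩ = √(y² + 1)` and `φ(x) = d_max - ⟨d_max - ⟨x⟩⟩`, so that `d_L(x,0) = φ(d̃_L(x,0))`.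
Since `|⟨y⟩'| = |y| / ⟨y⟩ ≤ 1` and `0 < ⟨y⟩'' = ⟨y⟩⁻³ ≤ 1`, the chain rule gives `|φ'| ≤ 1` and
`|φ''| ≤ 1 + 1` on all of `ℝ`, whatever `L` is.

Smoothness is only at stake at the kinks of `d̃_L`. As `φ` is even, `d_L(x,0) = φ(|t| - L/2)`
for `t = x - L/2 - mL` with `|t| ≤ L`, and every `x` is covered this way. Now `g(|t|)` is `C²`,
with derivatives `sign t · g'(|t|)` and `g''(|t|)`, as soon as `g'(0) = 0`, and here
`g'(0) = φ'(-L/2) = 0` precisely because `d_max = ⟨L/2⟩`.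
-/

open Filter Topology

theorem abs_sign_le_one (x : ℝ) : |(SignType.sign x : ℝ)| ≤ 1 := by
  rcases SignType.sign x with _ | _ | _ <;> simp

theorem contDiff_two_of_hasDerivAt_deriv {f f'' : ℝ → ℝ} (hf : Differentiable ℝ f)
    (hf' : ∀ x, HasDerivAt (deriv f) (f'' x) x) (hf'' : Continuous f'') : ContDiff ℝ 2 f := by
  rw [show (2 : WithTop ℕ∞) = 1 + 1 from rfl, contDiff_succ_iff_deriv, contDiff_one_iff_deriv,
    funext fun x => (hf' x).deriv]
  exact ⟨hf, by simp, fun x => (hf' x).differentiableAt, hf''⟩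

section AbsComposition

variable {g g' g'' : ℝ → ℝ}

theorem continuousAt_sign_mul_comp_abs (hg' : ContinuousAt g' 0) (h0 : g' 0 = 0) :
    ContinuousAt (fun s => (SignType.sign s : ℝ) * g' |s|) 0 := by
  have hlim : Tendsto (fun s => g' |s|) (𝓝 0) (𝓝 0) := by
    have := hg'.tendsto.comp (continuous_abs.tendsto' 0 0 abs_zero)
    rwa [h0] at this
  rw [ContinuousAt, show (SignType.sign (0 : ℝ) : ℝ) * g' |0| = 0 by simp]
  refine squeeze_zero_norm (fun s => ?_) (by simpa using hlim.norm)
  rw [norm_mul]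
  exact mul_le_of_le_one_left (norm_nonneg _) (abs_sign_le_one s)

theorem hasDerivAt_comp_abs (hg : ∀ t, HasDerivAt g (g' t) t) (hg' : ContinuousAt g' 0)
    (h0 : g' 0 = 0) (t : ℝ) :
    HasDerivAt (fun t => g |t|) ((SignType.sign t : ℝ) * g' |t|) t := by
  refine hasDerivAt_of_hasDerivAt_of_ne' (f := fun t => g |t|)
    (g := fun s => (SignType.sign s : ℝ) * g' |s|) (x := 0) (fun s hs => ?_) ?_
    (continuousAt_sign_mul_comp_abs hg' h0) t
  · rw [mul_comm]
    exact (hg |s|).comp s (hasDerivAt_abs hs)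
  · exact (hg 0).continuousAt.comp_of_eq continuous_abs.continuousAt abs_zero

theorem hasDerivAt_sign_mul_comp_abs (hg' : ∀ t, HasDerivAt g' (g'' t) t)
    (hg'' : ContinuousAt g'' 0) (h0 : g' 0 = 0) (t : ℝ) :
    HasDerivAt (fun t => (SignType.sign t : ℝ) * g' |t|) (g'' |t|) t := by
  refine hasDerivAt_of_hasDerivAt_of_ne' (f := fun t => (SignType.sign t : ℝ) * g' |t|)
    (g := fun s => g'' |s|) (x := 0) (fun s hs => ?_)
    (continuousAt_sign_mul_comp_abs (hg' 0).continuousAt h0) ?_ t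
  · have hsign : ∀ᶠ r in 𝓝 s, SignType.sign r = SignType.sign s := by
      have := continuousAt_sign_of_ne_zero hs
      rw [ContinuousAt, nhds_discrete SignType] at this
      exact tendsto_pure.1 this
    have hsq : (SignType.sign s : ℝ) * SignType.sign s = 1 := by
      rcases hs.lt_or_gt with hs | hs <;> simp [sign_neg, sign_pos, hs]
    have := (((hg' |s|).comp s (hasDerivAt_abs hs)).const_mul (SignType.sign s : ℝ))
    rw [mul_left_comm, hsq, mul_one] at this
    exact this.congr_of_eventuallyEq
      (hsign.mono fun r hr => by simp only [hr, Function.comp_apply])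
  · exact hg''.comp_of_eq continuous_abs.continuousAt abs_zero

end AbsComposition

noncomputable def japaneseBracket (y : ℝ) : ℝ := √(y ^ 2 + 1)

theorem one_le_japaneseBracket (y : ℝ) : 1 ≤ japaneseBracket y :=
  Real.one_le_sqrt.2 (by nlinarith [sq_nonneg y])

theorem japaneseBracket_pos (y : ℝ) : 0 < japaneseBracket y :=
  one_pos.trans_le (one_le_japaneseBracket y)

theorem japaneseBracket_abs (y : ℝ) : japaneseBracket |y| = japaneseBracket y := by
  rw [japaneseBracket, sq_abs, japaneseBracket]

theorem abs_div_japaneseBracket_le_one (y : ℝ) : |y / japaneseBracket y| ≤ 1 := by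
  rw [abs_div, abs_of_pos (japaneseBracket_pos y), div_le_one (japaneseBracket_pos y),
    ← Real.sqrt_sq_eq_abs]
  exact Real.sqrt_le_sqrt (by linarith)

theorem inv_japaneseBracket_pow_le_one (y : ℝ) (n : ℕ) : (japaneseBracket y ^ n)⁻¹ ≤ 1 :=
  inv_le_one_of_one_le₀ (one_le_pow₀ (one_le_japaneseBracket y))

theorem continuous_japaneseBracket : Continuous japaneseBracket := by
  unfold japaneseBracket; fun_prop

theorem hasDerivAt_japaneseBracket (y : ℝ) :
    HasDerivAt japaneseBracket (y / japaneseBracket y) y := by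
  refine (((hasDerivAt_pow 2 y).add_const 1).sqrt (by positivity)).congr_deriv ?_
  simp only [japaneseBracket]
  field_simp
  ring

theorem hasDerivAt_div_japaneseBracket (y : ℝ) :
    HasDerivAt (fun y => y / japaneseBracket y) ((japaneseBracket y ^ 3)⁻¹) y := by
  have hpos := japaneseBracket_pos y
  have hsq : japaneseBracket y ^ 2 = y ^ 2 + 1 := Real.sq_sqrt (by positivity)
  refine ((hasDerivAt_id' y).div (hasDerivAt_japaneseBracket y) hpos.ne').congr_deriv ?_
  field_simp
  rw [hsq]
  ring

section MollifiedDistance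

variable (c : ℝ)

noncomputable def mollifyDist (x : ℝ) : ℝ := c - japaneseBracket (c - japaneseBracket x)

noncomputable def mollifyDistDeriv (x : ℝ) : ℝ :=
  (c - japaneseBracket x) / japaneseBracket (c - japaneseBracket x) * (x / japaneseBracket x)

noncomputable def mollifyDistDeriv2 (x : ℝ) : ℝ :=
  (c - japaneseBracket x) / japaneseBracket (c - japaneseBracket x) * (japaneseBracket x ^ 3)⁻¹ -
    (japaneseBracket (c - japaneseBracket x) ^ 3)⁻¹ * (x / japaneseBracket x) ^ 2

theorem mollifyDist_abs (x : ℝ) : mollifyDist c |x| = mollifyDist c x := by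
  rw [mollifyDist, japaneseBracket_abs, mollifyDist]

theorem mollifyDistDeriv_eq_zero {x : ℝ} (hc : c = japaneseBracket x) :
    mollifyDistDeriv c x = 0 := by
  rw [mollifyDistDeriv, hc, sub_self, zero_div, zero_mul]

theorem hasDerivAt_mollifyDist (x : ℝ) :
    HasDerivAt (mollifyDist c) (mollifyDistDeriv c x) x := by
  have := (((hasDerivAt_japaneseBracket _).comp x
    ((hasDerivAt_japaneseBracket x).const_sub c)).const_sub c)
  refine this.congr_deriv ?_
  rw [mollifyDistDeriv]
  ring

theorem hasDerivAt_mollifyDistDeriv (x : ℝ) :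
    HasDerivAt (mollifyDistDeriv c) (mollifyDistDeriv2 c x) x := by
  have := ((hasDerivAt_div_japaneseBracket _).comp x
    ((hasDerivAt_japaneseBracket x).const_sub c)).mul (hasDerivAt_div_japaneseBracket x)
  refine this.congr_deriv ?_
  rw [mollifyDistDeriv2, Function.comp_apply]
  ring

theorem continuous_mollifyDistDeriv2 : Continuous (mollifyDistDeriv2 c) := by
  have hcont := continuous_japaneseBracket
  have hne := fun y => (japaneseBracket_pos y).ne'
  unfold mollifyDistDeriv2
  fun_prop (disch := intros; first | exact hne _ | exact pow_ne_zero _ (hne _))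

theorem abs_mollifyDistDeriv_le (x : ℝ) : |mollifyDistDeriv c x| ≤ 1 := by
  rw [mollifyDistDeriv, abs_mul]
  exact mul_le_one₀ (abs_div_japaneseBracket_le_one _) (abs_nonneg _)
    (abs_div_japaneseBracket_le_one x)

theorem abs_mollifyDistDeriv2_le (x : ℝ) : |mollifyDistDeriv2 c x| ≤ 2 := by
  rw [mollifyDistDeriv2]
  set a := c - japaneseBracket x
  have hp0 : 0 ≤ (japaneseBracket x ^ 3)⁻¹ := by have := japaneseBracket_pos x; positivity
  have hq0 : 0 ≤ (japaneseBracket a ^ 3)⁻¹ := by have := japaneseBracket_pos a; positivity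
  have h1 : |a / japaneseBracket a * (japaneseBracket x ^ 3)⁻¹| ≤ 1 := by
    rw [abs_mul, abs_of_nonneg hp0]
    exact mul_le_one₀ (abs_div_japaneseBracket_le_one a) hp0 (inv_japaneseBracket_pow_le_one x 3)
  have h2 : |(japaneseBracket a ^ 3)⁻¹ * (x / japaneseBracket x) ^ 2| ≤ 1 := by
    rw [abs_mul, abs_of_nonneg hq0, abs_pow]
    exact mul_le_one₀ (inv_japaneseBracket_pow_le_one a 3) (by positivity)
      (pow_le_one₀ (abs_nonneg _) (abs_div_japaneseBracket_le_one x))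
  exact (abs_sub _ _).trans (by linarith)

end MollifiedDistance

section AroundHalfPeriod

variable (L : ℝ)

noncomputable def dmolAroundHalf (t : ℝ) : ℝ := mollifyDist √(L ^ 2 / 4 + 1) (|t| - L / 2)

theorem mollifyDistDeriv_neg_half : mollifyDistDeriv √(L ^ 2 / 4 + 1) (0 - L / 2) = 0 :=
  mollifyDistDeriv_eq_zero _ (by rw [japaneseBracket]; ring_nf)

theorem hasDerivAt_dmolAroundHalf (t : ℝ) :
    HasDerivAt (dmolAroundHalf L)
      ((SignType.sign t : ℝ) * mollifyDistDeriv √(L ^ 2 / 4 + 1) (|t| - L / 2)) t :=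
  hasDerivAt_comp_abs (fun s => (hasDerivAt_mollifyDist _ _).comp_sub_const s (L / 2))
    ((hasDerivAt_mollifyDistDeriv _ _).comp_sub_const 0 (L / 2)).continuousAt
    (mollifyDistDeriv_neg_half L) t

theorem hasDerivAt_deriv_dmolAroundHalf (t : ℝ) :
    HasDerivAt (deriv (dmolAroundHalf L))
      (mollifyDistDeriv2 √(L ^ 2 / 4 + 1) (|t| - L / 2)) t := by
  rw [funext fun t => (hasDerivAt_dmolAroundHalf L t).deriv]
  exact hasDerivAt_sign_mul_comp_abs
    (fun s => (hasDerivAt_mollifyDistDeriv _ _).comp_sub_const s (L / 2))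
    ((continuous_mollifyDistDeriv2 _).comp (continuous_sub_right _)).continuousAt
    (mollifyDistDeriv_neg_half L) t

theorem contDiff_dmolAroundHalf : ContDiff ℝ 2 (dmolAroundHalf L) :=
  contDiff_two_of_hasDerivAt_deriv (fun t => (hasDerivAt_dmolAroundHalf L t).differentiableAt)
    (hasDerivAt_deriv_dmolAroundHalf L)
    ((continuous_mollifyDistDeriv2 _).comp (continuous_abs.sub continuous_const))

theorem abs_deriv_dmolAroundHalf_le (t : ℝ) : |deriv (dmolAroundHalf L) t| ≤ 1 := by
  rw [(hasDerivAt_dmolAroundHalf L t).deriv, abs_mul]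
  exact mul_le_one₀ (abs_sign_le_one t) (abs_nonneg _) (abs_mollifyDistDeriv_le _ _)

theorem abs_deriv_deriv_dmolAroundHalf_le (t : ℝ) : |deriv (deriv (dmolAroundHalf L)) t| ≤ 2 := by
  rw [(hasDerivAt_deriv_dmolAroundHalf L t).deriv]
  exact abs_mollifyDistDeriv2_le _ _

end AroundHalfPeriod

theorem dtilde_periodic (L : ℝ) : Function.Periodic (dtilde L) L := by
  intro x
  unfold dtilde
  congr 1
  ext r
  constructor
  · rintro ⟨k, rfl⟩
    exact ⟨k - 1, by push_cast; ring_nf⟩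
  · rintro ⟨k, rfl⟩
    exact ⟨k + 1, by push_cast; ring_nf⟩

theorem dtilde_eq_abs {L v : ℝ} (hv : |v| ≤ L / 2) : dtilde L v = |v| := by
  refine IsLeast.csInf_eq ⟨⟨0, by simp⟩, ?_⟩
  rintro r ⟨k, rfl⟩
  rcases eq_or_ne k 0 with rfl | hk
  · simp
  have hLk : |L| ≤ |L * k| := by
    rw [abs_mul]
    refine le_mul_of_one_le_right (abs_nonneg L) ?_
    exact_mod_cast Int.one_le_abs hk
  linarith [le_abs_self L, abs_sub_abs_le_abs_sub (L * k) v, abs_sub_comm (L * k) v]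

theorem dmol_eq_mollifyDist (L x : ℝ) : dmol L x = mollifyDist √(L ^ 2 / 4 + 1) (dtilde L x) :=
  rfl

theorem dmol_periodic (L : ℝ) : Function.Periodic (dmol L) L := fun x => by
  rw [dmol_eq_mollifyDist, dtilde_periodic L x, dmol_eq_mollifyDist]

theorem dmol_eq_dmolAroundHalf {L z : ℝ} (hz : |z - L / 2| ≤ L) :
    dmol L z = dmolAroundHalf L (z - L / 2) := by
  obtain ⟨hz₁, hz₂⟩ := abs_le.1 hz
  rw [dmol_eq_mollifyDist, dmolAroundHalf]
  rcases le_total z (L / 2) with h | h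
  · rw [dtilde_eq_abs (abs_le.2 ⟨by linarith, h⟩), abs_of_nonpos (by linarith : z - L / 2 ≤ 0),
      show -(z - L / 2) - L / 2 = -z by ring, ← mollifyDist_abs _ (-z), abs_neg]
  · rw [← (dtilde_periodic L).sub_eq, dtilde_eq_abs (abs_le.2 ⟨by linarith, by linarith⟩),
      mollifyDist_abs, abs_of_nonneg (by linarith : 0 ≤ z - L / 2)]
    congr 1
    ring

theorem dmol_eventuallyEq_dmolAroundHalf {L : ℝ} (hL : 0 < L) (x : ℝ) :
    ∃ y, dmol L =ᶠ[𝓝 x] fun z => dmolAroundHalf L (z - y) := by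
  set m := ⌊x / L⌋
  have hm₁ : m * L ≤ x := (le_div_iff₀ hL).1 (Int.floor_le _)
  have hm₂ : x < m * L + L := by
    have := (div_lt_iff₀ hL).1 (Int.lt_floor_add_one (x / L))
    linarith
  refine ⟨m * L + L / 2, ?_⟩
  filter_upwards [Ioo_mem_nhds (by linarith : m * L - L / 2 < x)
    (by linarith : x < m * L + 3 * L / 2)] with z hz
  rw [← (dmol_periodic L).sub_int_mul_eq m,
    dmol_eq_dmolAroundHalf (abs_le.2 ⟨by linarith [hz.1], by linarith [hz.2]⟩)]
  congr 1
  ring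

/-- For `L ≥ 1`, the mollified periodic distance `x ↦ d_L(x,0)` is twice
continuously differentiable, with `|∂ₓ d_L(x,0)| ≤ 1` and `|∂ₓ² d_L(x,0)| ≤ 2` for all `x`. -/
theorem stmt_0 (L : ℝ) (hL : 1 ≤ L) :
    ContDiff ℝ 2 (fun x => dmol L x) ∧
    (∀ x : ℝ, |deriv (fun x => dmol L x) x| ≤ 1) ∧
    (∀ x : ℝ, |deriv (deriv (fun x => dmol L x)) x| ≤ 2) := by
  have hL0 : 0 < L := by linarith
  refine ⟨contDiff_iff_contDiffAt.2 fun x => ?_, fun x => ?_, fun x => ?_⟩ <;>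
    obtain ⟨y, hy⟩ := dmol_eventuallyEq_dmolAroundHalf hL0 x
  · exact ((contDiff_dmolAroundHalf L).comp (contDiff_id.sub contDiff_const)).contDiffAt
      |>.congr_of_eventuallyEq hy
  · rw [hy.deriv_eq, deriv_comp_sub_const]
    exact abs_deriv_dmolAroundHalf_le L _
  · have hshift : deriv (fun z => dmolAroundHalf L (z - y)) =
        fun z => deriv (dmolAroundHalf L) (z - y) := funext fun z => deriv_comp_sub_const _ _ _
    rw [hy.deriv.deriv_eq, hshift, deriv_comp_sub_const]
    exact abs_deriv_deriv_dmolAroundHalf_le L _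
end

section
/- Let L ≥ 1, N a positive even integer, Δx = L/N, and let g : 𝒳 → ℂ be a lattice function with discrete Fourier transform ĝ. Then ‖ d(·,0) g ‖_{L²(𝒳)} ≤ (√π / (2√2)) ‖ 𝒟 ĝ ‖_{L²(𝒦)}, where d(x,0) = x for x ∈ [0, L/2) and d(x,0) = L − x for x ∈ [L/2, L). -/
open scoped BigOperators Real
open MeasureTheory

/-! Up to the factor `Δx`, `dft` is Mathlib's `ZMod.dft`, under which the difference `𝒟` on the
Fourier side becomes multiplication by `(1 - e^{iΔk x}) / Δk` on the lattice. Parseval then gives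
`‖𝒟 ĝ‖_{L²(𝒦)} = √(2π) ‖(1 - e^{iΔk x}) g / Δk‖_{L²(𝒳)}`, and
`|1 - e^{iΔk x}| / Δk = (L / π) sin (π x / L) ≥ (2 / π) d(x, 0)` by Jordan's inequality. -/

open Finset
open scoped ZMod

namespace ZMod

variable {N : ℕ} [NeZero N]

lemma conj_stdAddChar (a : ZMod N) : (starRingEnd ℂ) (stdAddChar a) = stdAddChar (-a) := by
  rw [stdAddChar_apply, stdAddChar_apply, AddChar.map_neg_eq_inv, Circle.coe_inv_eq_conj]

lemma sum_norm_sq_dft (Φ : ZMod N → ℂ) : ∑ k, ‖𝓕 Φ k‖ ^ 2 = N * ∑ j, ‖Φ j‖ ^ 2 := by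
  classical
  have hchar (j j' k : ZMod N) :
      stdAddChar (-(j * k)) * (starRingEnd ℂ) (stdAddChar (-(j' * k))) =
        stdAddChar (k * (j' - j)) := by
    rw [conj_stdAddChar, ← AddChar.map_add_eq_mul]; ring_nf
  apply Complex.ofReal_injective
  push_cast
  simp only [← Complex.mul_conj', dft_apply, smul_eq_mul, map_sum, map_mul, sum_mul_sum]
  rw [mul_sum]
  calc _ = ∑ j, ∑ j', (∑ k, stdAddChar (k * (j' - j))) * (Φ j * (starRingEnd ℂ) (Φ j')) := by
        rw [sum_comm]
        refine sum_congr rfl fun j _ ↦ ?_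
        rw [sum_comm]
        refine sum_congr rfl fun j' _ ↦ ?_
        rw [sum_mul]
        refine sum_congr rfl fun k _ ↦ ?_
        rw [← hchar]; ring
    _ = ∑ j, N * (Φ j * (starRingEnd ℂ) (Φ j)) := by
        refine sum_congr rfl fun j _ ↦ ?_
        simp [AddChar.sum_mulShift _ (isPrimitive_stdAddChar N), sub_eq_zero, ite_mul]

lemma dft_sub_dft_sub_one {E : Type*} [AddCommGroup E] [Module ℂ E] (Φ : ZMod N → E)
    (k : ZMod N) : 𝓕 Φ k - 𝓕 Φ (k - 1) = 𝓕 (fun j ↦ (1 - stdAddChar j) • Φ j) k := by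
  rw [dft_apply, dft_apply, dft_apply, ← sum_sub_distrib]
  refine sum_congr rfl fun j _ ↦ ?_
  rw [show -(j * (k - 1)) = -(j * k) + j by ring, AddChar.map_add_eq_mul, smul_smul, mul_sub,
    mul_one, sub_smul]

lemma norm_one_sub_stdAddChar (j : ZMod N) :
    ‖1 - stdAddChar j‖ = 2 * Real.sin (π * j.val / N) := by
  have hN : (0 : ℝ) < N := by exact_mod_cast NeZero.pos N
  have hsin : 0 ≤ Real.sin (π * j.val / N) := by
    refine Real.sin_nonneg_of_nonneg_of_le_pi (by positivity) ?_
    rw [mul_div_assoc]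
    refine mul_le_of_le_one_right Real.pi_pos.le ((div_le_one hN).2 ?_)
    exact_mod_cast (ZMod.val_lt j).le
  rw [stdAddChar_apply, toCircle_apply, norm_sub_rev,
    show 2 * π * Complex.I * j.val / N = Complex.I * ((2 * (π * j.val / N) : ℝ) : ℂ) by
      push_cast; ring,
    Complex.norm_exp_I_mul_ofReal_sub_one, mul_div_cancel_left₀ _ two_ne_zero, Real.norm_eq_abs,
    abs_of_nonneg (by positivity)]

end ZMod

lemma le_mul_sin_of_le_half {L y : ℝ} (hL : 0 < L) (hy0 : 0 ≤ y) (hy : y ≤ L / 2) :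
    y ≤ L / 2 * Real.sin (π * y / L) := by
  have hle : π * y / L ≤ π / 2 := by
    rw [div_le_div_iff₀ hL two_pos]; nlinarith [Real.pi_pos]
  have := Real.mul_le_sin (by positivity) hle
  rw [show 2 / π * (π * y / L) = y / (L / 2) by field_simp] at this
  rwa [div_le_iff₀' (by positivity)] at this

lemma dfun_le_mul_sin {L x : ℝ} (hL : 0 < L) (hx0 : 0 ≤ x) (hxL : x ≤ L) :
    dfun L x ≤ L / 2 * Real.sin (π * x / L) := by
  unfold dfun
  split_ifs with hx
  · exact le_mul_sin_of_le_half hL hx0 hx.le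
  · rw [← Real.sin_pi_sub, show π - π * x / L = π * (L - x) / L by field_simp]
    exact le_mul_sin_of_le_half hL (by linarith) (by linarith)

lemma dfun_nonneg {L x : ℝ} (hx0 : 0 ≤ x) (hxL : x ≤ L) : 0 ≤ dfun L x := by
  unfold dfun; split_ifs <;> linarith

section

variable {N : ℕ} [NeZero N]

lemma exists_intCast_eq_kval (L : ℝ) (j : ZMod N) :
    ∃ m : ℤ, (m : ZMod N) = j ∧ kval L N j = m * (2 * π / L) := by
  refine ⟨if (j.val : ℤ) ≤ (N : ℤ) / 2 then (j.val : ℤ) else (j.val : ℤ) - N, ?_, ?_⟩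
  · split_ifs <;> simp
  · rw [kval]
    split_ifs <;> push_cast <;> rfl

lemma dft_eq_smul_zmod_dft (L : ℝ) (f : ZMod N → ℂ) : dft L f = ((L / N : ℝ) : ℂ) • 𝓕 f := by
  rcases eq_or_ne L 0 with rfl | hL
  · ext j
    simp [dft]
  ext j
  obtain ⟨m, rfl, hm⟩ := exists_intCast_eq_kval L j
  simp only [dft, ZMod.dft_apply, Pi.smul_apply, smul_eq_mul, gridX, hm]
  congr 1
  refine sum_congr rfl fun i _ ↦ ?_
  have hcast : ((-(m * i.val) : ℤ) : ZMod N) = -(i * m) := by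
    push_cast [ZMod.natCast_zmod_val]; ring
  rw [← hcast, ZMod.stdAddChar_coe]
  have hLc : (L : ℂ) ≠ 0 := by exact_mod_cast hL
  congr 2
  push_cast
  field_simp

lemma Dk_dft (dk L : ℝ) (g : ZMod N → ℂ) :
    Dk dk (dft L g) = dft L (fun i ↦ (1 - ZMod.stdAddChar i) / dk * g i) := by
  ext j
  simp only [Dk, dft_eq_smul_zmod_dft, Pi.smul_apply, smul_eq_mul]
  rw [← mul_sub, ZMod.dft_sub_dft_sub_one, mul_div_assoc]
  congr 1
  simp only [ZMod.dft_apply, smul_eq_mul, sum_div]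
  refine sum_congr rfl fun i _ ↦ ?_
  ring

lemma wnorm_dft {L : ℝ} (hL : 0 < L) (f : ZMod N → ℂ) :
    wnorm (2 * π / L) (dft L f) = √(2 * π) * wnorm (L / N) f := by
  have hN : (N : ℝ) ≠ 0 := NeZero.ne _
  rw [wnorm, wnorm, ← Real.sqrt_mul (by positivity), dft_eq_smul_zmod_dft]
  simp only [Pi.smul_apply, norm_smul, mul_pow, ← mul_sum, ZMod.sum_norm_sq_dft, Complex.norm_real,
    Real.norm_eq_abs, sq_abs]
  congr 1
  field_simp

lemma wnorm_le_mul {w c : ℝ} (hw : 0 ≤ w) (hc : 0 ≤ c) {f g : ZMod N → ℂ}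
    (hfg : ∀ i, ‖f i‖ ≤ c * ‖g i‖) : wnorm w f ≤ c * wnorm w g := by
  rw [wnorm, wnorm, ← Real.sqrt_sq hc, ← Real.sqrt_mul (sq_nonneg c)]
  refine Real.sqrt_le_sqrt ?_
  rw [mul_left_comm]
  refine mul_le_mul_of_nonneg_left ?_ hw
  rw [mul_sum]
  gcongr with i
  rw [← mul_pow]
  gcongr
  exact hfg i

lemma dfun_gridX_le {L : ℝ} (hL : 0 < L) (i : ZMod N) :
    |dfun L (gridX L N i)| ≤ π / 2 * ‖(1 - ZMod.stdAddChar i) / ((2 * π / L : ℝ) : ℂ)‖ := by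
  have hN : (0 : ℝ) < N := by exact_mod_cast NeZero.pos N
  have hx0 : 0 ≤ gridX L N i := by unfold gridX; positivity
  have hxL : gridX L N i ≤ L := by
    unfold gridX
    calc (i.val : ℝ) * (L / N) ≤ N * (L / N) := by gcongr; exact_mod_cast (ZMod.val_lt i).le
      _ = L := by field_simp
  rw [abs_of_nonneg (dfun_nonneg hx0 hxL), norm_div, ZMod.norm_one_sub_stdAddChar,
    Complex.norm_real, Real.norm_of_nonneg (by positivity)]
  calc dfun L (gridX L N i) ≤ L / 2 * Real.sin (π * gridX L N i / L) := dfun_le_mul_sin hL hx0 hxL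
    _ = π / 2 * (2 * Real.sin (π * i.val / N) / (2 * π / L)) := by
      unfold gridX
      field_simp

end

theorem stmt_8_general (L : ℝ) (N : ℕ) [NeZero N] (hL : 1 ≤ L) (g : ZMod N → ℂ) :
    wnorm (L / N) (fun i => ((dfun L (gridX L N i) : ℝ) : ℂ) * g i) ≤
      Real.sqrt Real.pi / (2 * Real.sqrt 2) *
        wnorm (2 * Real.pi / L) (Dk (2 * Real.pi / L) (dft L g)) := by
  have hL0 : 0 < L := by linarith
  have hconst : √π / (2 * √2) * √(2 * π) = π / 2 := by
    rw [Real.sqrt_mul zero_le_two]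
    field_simp
    rw [Real.sq_sqrt Real.pi_pos.le]
  rw [Dk_dft, wnorm_dft hL0, ← mul_assoc, hconst]
  refine wnorm_le_mul (by positivity) (by positivity) fun i ↦ ?_
  rw [norm_mul, norm_mul, Complex.norm_real, Real.norm_eq_abs, ← mul_assoc]
  exact mul_le_mul_of_nonneg_right (dfun_gridX_le hL0 i) (norm_nonneg _)

/-- `‖d(·,0) g‖_{L²(𝒳)} ≤ (√π/(2√2)) ‖𝒟 ĝ‖_{L²(𝒦)}`. -/
theorem stmt_8 (L : ℝ) (N : ℕ) [NeZero N] (hL : 1 ≤ L) (hN : Even N) (g : ZMod N → ℂ) :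
    wnorm (L / N) (fun i => ((dfun L (gridX L N i) : ℝ) : ℂ) * g i) ≤
      Real.sqrt Real.pi / (2 * Real.sqrt 2) *
        wnorm (2 * Real.pi / L) (Dk (2 * Real.pi / L) (dft L g)) :=
  stmt_8_general L N hL g
end

section
/- Let L ≥ 1, N a positive even integer, Δx = L/N, let g : 𝒳 → ℂ be a lattice function with discrete Fourier transform ĝ, and let m be a positive integer. Then for every x ∈ 𝒳, ( (e^{i Δk x} − 1)^m / Δk^m ) g(x) = ( (−1)^m / L ) Σ_{k ∈ 𝒦} e^{i k x} (𝒟^{(m)} ĝ)_k, where 𝒟^{(m)} is the m-fold application of the periodic difference operator 𝒟 on the Fourier grid. -/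
open scoped BigOperators Real
open MeasureTheory

section aux
variable {N : ℕ} [NeZero N]

open ZMod in
lemma char_sum (t : ZMod N) :
    ∑ i : ZMod N, stdAddChar (t * i) = if t = 0 then (N : ℂ) else 0 := by
  split_ifs with h
  · simp only [h, zero_mul, AddChar.map_zero_eq_one, Finset.sum_const, Finset.card_univ,
      ZMod.card, nsmul_eq_mul, mul_one]
  · exact AddChar.sum_eq_zero_of_ne_one (isPrimitive_stdAddChar N h)

open ZMod in
lemma exp_helper (L : ℝ) (hL : L ≠ 0) (n : ℤ) (j i : ZMod N) (hj : ((n : ZMod N)) = j) :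
    Complex.exp (Complex.I * (((n : ℝ) * (2 * Real.pi / L) : ℝ) : ℂ) * ((gridX L N i : ℝ) : ℂ)) =
      stdAddChar (j * i) := by
  have hNC : (N : ℂ) ≠ 0 := Nat.cast_ne_zero.2 (NeZero.ne N)
  have hLC : (L : ℂ) ≠ 0 := Complex.ofReal_ne_zero.2 hL
  have harg : Complex.I * (((n : ℝ) * (2 * Real.pi / L) : ℝ) : ℂ) * ((gridX L N i : ℝ) : ℂ) =
      2 * Real.pi * Complex.I * ((n * (ZMod.val i : ℤ) : ℤ) : ℂ) / N := by
    rw [gridX]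
    push_cast
    field_simp
  rw [harg, ← stdAddChar_coe]
  congr 1
  push_cast
  rw [hj, natCast_zmod_val]

open ZMod in
lemma exp_kval (L : ℝ) (hL : L ≠ 0) (j i : ZMod N) :
    Complex.exp (Complex.I * (kval L N j : ℂ) * ((gridX L N i : ℝ) : ℂ)) =
      stdAddChar (j * i) := by
  rw [kval]
  split_ifs with hc
  · exact exp_helper L hL (ZMod.val j : ℤ) j i (by push_cast; simp [natCast_zmod_val])
  · have h := exp_helper L hL ((ZMod.val j : ℤ) - N) j i
      (by push_cast; simp [ZMod.natCast_self, natCast_zmod_val])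
    rw [← h]
    norm_cast

open ZMod in
lemma exp_kval_neg (L : ℝ) (hL : L ≠ 0) (j i : ZMod N) :
    Complex.exp (-Complex.I * (kval L N j : ℂ) * ((gridX L N i : ℝ) : ℂ)) =
      stdAddChar (-(j * i)) := by
  have h := exp_kval (N := N) L hL j i
  have harg : -Complex.I * (kval L N j : ℂ) * ((gridX L N i : ℝ) : ℂ) =
      -(Complex.I * (kval L N j : ℂ) * ((gridX L N i : ℝ) : ℂ)) := by ring
  rw [harg, Complex.exp_neg, h, ← AddChar.map_neg_eq_inv]

open ZMod in
lemma exp_dk (L : ℝ) (hL : L ≠ 0) (i : ZMod N) :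
    Complex.exp (Complex.I * ((2 * Real.pi / L : ℝ) : ℂ) * ((gridX L N i : ℝ) : ℂ)) =
      stdAddChar i := by
  have h := exp_helper (N := N) L hL 1 1 i (by push_cast; rfl)
  simpa using h

open ZMod in
lemma inversion (L : ℝ) (hL : L ≠ 0) (g : ZMod N → ℂ) (i : ZMod N) :
    (1 / (L : ℂ)) * ∑ j : ZMod N,
      Complex.exp (Complex.I * (kval L N j : ℂ) * ((gridX L N i : ℝ) : ℂ)) * _root_.dft L g j
      = g i := by
  have hNC : (N : ℂ) ≠ 0 := Nat.cast_ne_zero.2 (NeZero.ne N)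
  have hLC : (L : ℂ) ≠ 0 := Complex.ofReal_ne_zero.2 hL
  have expand : ∀ j : ZMod N,
      Complex.exp (Complex.I * (kval L N j : ℂ) * ((gridX L N i : ℝ) : ℂ)) * _root_.dft L g j
      = ∑ i' : ZMod N, ((L / N : ℝ) : ℂ) * (stdAddChar (j * i) * stdAddChar (-(j * i')) * g i') := by
    intro j
    rw [_root_.dft, exp_kval L hL, Finset.mul_sum, Finset.mul_sum]
    refine Finset.sum_congr rfl fun i' _ => ?_
    rw [exp_kval_neg L hL]
    ring
  have inner : ∀ i' : ZMod N,
      ∑ j : ZMod N, ((L / N : ℝ) : ℂ) * (stdAddChar (j * i) * stdAddChar (-(j * i')) * g i')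
      = ((L / N : ℝ) : ℂ) * g i' * (if i - i' = 0 then (N : ℂ) else 0) := by
    intro i'
    rw [← char_sum (i - i'), Finset.mul_sum]
    refine Finset.sum_congr rfl fun j _ => ?_
    have : stdAddChar (j * i) * stdAddChar (-(j * i')) = stdAddChar ((i - i') * j) := by
      rw [← AddChar.map_add_eq_mul]
      congr 1
      ring
    rw [this]
    ring
  rw [Finset.sum_congr rfl fun j _ => expand j, Finset.sum_comm]
  rw [Finset.sum_congr rfl fun i' _ => inner i']
  rw [Finset.sum_eq_single i]
  · rw [if_pos (sub_self i)]
    push_cast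
    field_simp
  · intro b _ hb
    rw [if_neg (by simpa [sub_eq_zero] using (Ne.symm hb)), mul_zero]
  · intro h; exact absurd (Finset.mem_univ i) h

open ZMod in
lemma sbp_step (L : ℝ) (hL : L ≠ 0) (f : ZMod N → ℂ) (i : ZMod N) :
    ∑ j : ZMod N,
      Complex.exp (Complex.I * (kval L N j : ℂ) * ((gridX L N i : ℝ) : ℂ)) *
        Dk (2 * Real.pi / L) f j
    = (-(Complex.exp (Complex.I * ((2 * Real.pi / L : ℝ) : ℂ) * ((gridX L N i : ℝ) : ℂ)) - 1)
        / ((2 * Real.pi / L : ℝ) : ℂ)) *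
      ∑ j : ZMod N,
        Complex.exp (Complex.I * (kval L N j : ℂ) * ((gridX L N i : ℝ) : ℂ)) * f j := by
  simp only [Dk, exp_kval L hL, exp_dk L hL]
  have h2 : ∑ j : ZMod N, stdAddChar (j * i) * f (j - 1)
      = stdAddChar i * ∑ j : ZMod N, stdAddChar (j * i) * f j := by
    rw [Finset.mul_sum]
    refine Fintype.sum_equiv (Equiv.subRight (1 : ZMod N)) _ _ fun j => ?_
    simp only [Equiv.subRight_apply]
    rw [← mul_assoc, ← AddChar.map_add_eq_mul]
    congr 2
    ring
  have h1 : ∑ j : ZMod N, stdAddChar (j * i) * ((f j - f (j - 1)) / ((2 * Real.pi / L : ℝ) : ℂ))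
      = (∑ j : ZMod N, stdAddChar (j * i) * f j
        - ∑ j : ZMod N, stdAddChar (j * i) * f (j - 1)) / ((2 * Real.pi / L : ℝ) : ℂ) := by
    rw [sub_div, Finset.sum_div, Finset.sum_div, ← Finset.sum_sub_distrib]
    exact Finset.sum_congr rfl fun j _ => by ring
  rw [h1, h2]
  ring

open ZMod in
lemma sbp_iter {N : ℕ} [NeZero N] (L : ℝ) (hL : L ≠ 0) (m : ℕ) (f : ZMod N → ℂ) (i : ZMod N) :
    ∑ j : ZMod N,
      Complex.exp (Complex.I * (kval L N j : ℂ) * ((gridX L N i : ℝ) : ℂ)) *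
        ((Dk (2 * Real.pi / L))^[m] f) j
    = (-(Complex.exp (Complex.I * ((2 * Real.pi / L : ℝ) : ℂ) * ((gridX L N i : ℝ) : ℂ)) - 1)
        / ((2 * Real.pi / L : ℝ) : ℂ)) ^ m *
      ∑ j : ZMod N,
        Complex.exp (Complex.I * (kval L N j : ℂ) * ((gridX L N i : ℝ) : ℂ)) * f j := by
  induction m with
  | zero => simp
  | succ n ih =>
    rw [Function.iterate_succ_apply', sbp_step L hL, ih, pow_succ]
    ring

end aux

/-- the identity
`((e^{iΔk x} - 1)^m / Δk^m) g(x) = ((-1)^m / L) Σ_k e^{ikx} (𝒟^{(m)} ĝ)_k`. -/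
theorem stmt_10 (L : ℝ) (N : ℕ) [NeZero N] (hL : 1 ≤ L) (hN : Even N)
    (g : ZMod N → ℂ) (m : ℕ) (hm : 0 < m) (i : ZMod N) :
    (Complex.exp (Complex.I * ((2 * Real.pi / L : ℝ) : ℂ) * ((gridX L N i : ℝ) : ℂ)) - 1) ^ m /
          ((2 * Real.pi / L : ℝ) : ℂ) ^ m * g i =
      (-1 : ℂ) ^ m / (L : ℂ) *
        ∑ j : ZMod N, Complex.exp (Complex.I * ((kval L N j : ℝ) : ℂ) * ((gridX L N i : ℝ) : ℂ)) *
          ((Dk (2 * Real.pi / L))^[m] (dft L g)) j := by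
  have hL0 : L ≠ 0 := by positivity
  rw [sbp_iter L hL0 m (dft L g) i]
  have hinv := inversion L hL0 g i
  rw [neg_div, neg_pow ((Complex.exp (Complex.I * ((2 * Real.pi / L : ℝ) : ℂ) *
      ((gridX L N i : ℝ) : ℂ)) - 1) / ((2 * Real.pi / L : ℝ) : ℂ)), div_pow]
  have hsq : ((-1 : ℂ)) ^ m * ((-1 : ℂ)) ^ m = 1 := by
    rw [← mul_pow]; norm_num
  set A : ℂ := (Complex.exp (Complex.I * ((2 * Real.pi / L : ℝ) : ℂ) *
      ((gridX L N i : ℝ) : ℂ)) - 1) ^ m / ((2 * Real.pi / L : ℝ) : ℂ) ^ m with hA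
  set S : ℂ := ∑ j : ZMod N,
      Complex.exp (Complex.I * ((kval L N j : ℝ) : ℂ) * ((gridX L N i : ℝ) : ℂ)) * dft L g j
    with hS
  linear_combination (-A) * hinv + (-(A * S / (L : ℂ))) * hsq
end

section
/- Let L ≥ 1, N a positive even integer with N ≥ 32, Δx = L/N ≤ 1, k_c = π/Δx, and let θ̂ : ℝ → ℝ be a smooth cut-off function with 0 ≤ θ̂ ≤ 1, θ̂(k) = 1 for |k| ≤ k_c/2, θ̂(k) = 0 for |k| ≥ (3/4)k_c, and such that for every integer j ≥ 0 the restriction of θ̂ to the Fourier grid 𝒦 satisfies ‖𝒟^{(j)} θ̂‖_{L^∞(𝒦)} ≤ C_{θ,j} with constants C_{θ,j} independent of k_c and L. Define the mollified symbol ĥ_k = θ̂(k)(k² − k_c²) + k_c² for k ∈ 𝒦, with k² interpreted periodically on 𝒦 in difference formulas. Then for every integer m with 1 ≤ m ≤ N/16 there is a constant C_{h,m}, depending only on m and the constants C_{θ,j} (independent of k_c and L), such that max_{k ∈ 𝒦} | (𝒟^{(m)} ĥ)_k | / (1 + ĥ_k) ≤ C_{h,m}. -/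
open scoped BigOperators Real
open MeasureTheory

section AuxStmt12

open Finset

private lemma alt_sum_zero {n : ℕ} (hn : n ≠ 0) :
    ∑ i ∈ Finset.range (n + 1), (-1 : ℝ) ^ i * (n.choose i : ℝ) = 0 := by
  have h := Int.alternating_sum_range_choose_of_ne hn
  have h2 : ((∑ i ∈ range (n + 1), ((-1 : ℤ) ^ i * n.choose i) : ℤ) : ℝ) = 0 := by
    rw [h]; simp
  push_cast at h2
  exact h2

private lemma DkR_eq_smul_fwdDiff {N : ℕ} (dk : ℝ) (g : ZMod N → ℝ) :
    DkR dk g = (-1 / dk) • fwdDiff (-1 : ZMod N) g := by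
  funext x
  show (g x - g (x - 1)) / dk = (-1 / dk) * (g (x + -1) - g x)
  rw [← sub_eq_add_neg]
  ring

private lemma iterDkR_smul {N : ℕ} (dk : ℝ) (f : ZMod N → ℝ) (m : ℕ) :
    (DkR dk)^[m] f = ((-1 / dk) ^ m) • (fwdDiff (-1 : ZMod N))^[m] f := by
  induction m with
  | zero => simp
  | succ m ih =>
    rw [Function.iterate_succ_apply', ih, Function.iterate_succ_apply',
      DkR_eq_smul_fwdDiff, fwdDiff_const_smul, smul_smul, ← pow_succ']

private lemma iterDkR_eq_sum {N : ℕ} {dk : ℝ} (hdk : dk ≠ 0) (f : ZMod N → ℝ) (m : ℕ)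
    (j : ZMod N) :
    (DkR dk)^[m] f j
      = (∑ i ∈ Finset.range (m + 1), (-1 : ℝ) ^ i * (m.choose i : ℝ) * f (j - (i : ZMod N)))
        / dk ^ m := by
  rw [iterDkR_smul, Pi.smul_apply, fwdDiff_iter_eq_sum_shift, smul_eq_mul, Finset.mul_sum,
    Finset.sum_div]
  refine Finset.sum_congr rfl fun i hi => ?_
  have him : i ≤ m := by simpa using Nat.lt_succ_iff.mp (Finset.mem_range.mp hi)
  have harg : j + i • (-1 : ZMod N) = j - (i : ZMod N) := by
    rw [nsmul_eq_mul, mul_neg_one, ← sub_eq_add_neg]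
  rw [harg, zsmul_eq_mul]
  push_cast
  have hpow : (-1 / dk) ^ m * (-1 : ℝ) ^ (m - i) = (-1) ^ i / dk ^ m := by
    rw [div_pow]
    have h1 : ((-1 : ℝ)) ^ m = (-1) ^ (m - i) * (-1) ^ i := by
      rw [← pow_add, Nat.sub_add_cancel him]
    have h2 : ((-1 : ℝ)) ^ (m - i) * (-1) ^ (m - i) = 1 := by
      rw [← pow_add]
      exact Even.neg_one_pow ⟨m - i, rfl⟩
    field_simp
    linear_combination ((-1 : ℝ) ^ (m - i)) * h1 + ((-1 : ℝ) ^ i) * h2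
  linear_combination ((m.choose i : ℝ) * f (j - (i : ZMod N))) * hpow

private lemma alt_sum_mul_i {M : ℕ} (u : ℕ → ℝ) :
    ∑ i ∈ Finset.range (M + 2), (-1 : ℝ) ^ i * ((M + 1).choose i : ℝ) * ((i : ℝ) * u i)
      = -((M : ℝ) + 1) * ∑ r ∈ Finset.range (M + 1), (-1 : ℝ) ^ r * (M.choose r : ℝ) * u (r + 1) := by
  rw [Finset.sum_range_succ' _ (M + 1)]
  simp only [Nat.cast_zero, zero_mul, mul_zero, add_zero]
  rw [Finset.mul_sum]
  refine Finset.sum_congr rfl fun i _ => ?_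
  have h1 : ((M : ℝ) + 1) * (M.choose i : ℝ) = ((M + 1).choose (i + 1) : ℝ) * ((i : ℝ) + 1) := by
    exact_mod_cast congrArg (Nat.cast : ℕ → ℝ) (Nat.add_one_mul_choose_eq M i)
  rw [pow_succ]
  push_cast
  linear_combination ((-1 : ℝ) ^ i * u (i + 1)) * h1

private lemma alt_sum_mul_ii {M : ℕ} (u : ℕ → ℝ) :
    ∑ i ∈ Finset.range (M + 2), (-1 : ℝ) ^ i * ((M + 1).choose i : ℝ)
        * ((i : ℝ) * ((i : ℝ) - 1) * u i)
      = (((M : ℝ) + 1) * M)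
          * ∑ r ∈ Finset.range M, (-1 : ℝ) ^ r * ((M - 1).choose r : ℝ) * u (r + 2) := by
  have h1 := alt_sum_mul_i (M := M) (fun i => ((i : ℝ) - 1) * u i)
  have e1 : ∑ i ∈ Finset.range (M + 2), (-1 : ℝ) ^ i * ((M + 1).choose i : ℝ)
      * ((i : ℝ) * ((i : ℝ) - 1) * u i)
      = -((M : ℝ) + 1) * ∑ r ∈ Finset.range (M + 1),
          (-1 : ℝ) ^ r * (M.choose r : ℝ) * ((r : ℝ) * u (r + 1)) := by
    rw [show (∑ i ∈ Finset.range (M + 2), (-1 : ℝ) ^ i * ((M + 1).choose i : ℝ)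
        * ((i : ℝ) * ((i : ℝ) - 1) * u i))
      = ∑ i ∈ Finset.range (M + 2), (-1 : ℝ) ^ i * ((M + 1).choose i : ℝ)
        * ((i : ℝ) * (((i : ℝ) - 1) * u i)) from Finset.sum_congr rfl fun i _ => by ring]
    rw [h1, Finset.mul_sum, Finset.mul_sum]
    refine Finset.sum_congr rfl fun r _ => ?_
    push_cast
    ring
  rw [e1]
  cases M with
  | zero =>
    rw [Finset.sum_range_one]
    norm_num
  | succ M' =>
    have h2 : (∑ i ∈ Finset.range (M' + 2), (-1 : ℝ) ^ i * (((M' + 1).choose i : ℕ) : ℝ)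
          * ((i : ℝ) * u (i + 1)))
        = -((M' : ℝ) + 1) * ∑ r ∈ Finset.range (M' + 1),
            (-1 : ℝ) ^ r * ((M'.choose r : ℕ) : ℝ) * u (r + 1 + 1) :=
      alt_sum_mul_i (fun r => u (r + 1))
    have e2 : M' + 1 + 1 = M' + 2 := by omega
    rw [e2, Nat.add_sub_cancel, h2]
    push_cast
    have e3 : ∀ r : ℕ, r + 1 + 1 = r + 2 := fun r => by omega
    simp only [e3]
    ring

private def nrep (N : ℕ) (j : ZMod N) : ℤ :=
  if (ZMod.val j : ℤ) ≤ (N : ℤ) / 2 then (ZMod.val j : ℤ) else (ZMod.val j : ℤ) - (N : ℤ)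

private lemma kval_eq_nrep (L : ℝ) (N : ℕ) (j : ZMod N) :
    kval L N j = (nrep N j : ℝ) * (2 * Real.pi / L) := by
  unfold kval nrep
  split <;> push_cast <;> ring

private lemma nrep_bounds {N : ℕ} [NeZero N] {P : ℤ} (hN2 : (N : ℤ) = 2 * P) (j : ZMod N) :
    -P < nrep N j ∧ nrep N j ≤ P := by
  have hv : (ZMod.val j : ℤ) < (N : ℤ) := by exact_mod_cast ZMod.val_lt j
  have hv0 : (0 : ℤ) ≤ (ZMod.val j : ℤ) := Int.natCast_nonneg _
  unfold nrep
  split <;> omega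

private lemma nrep_cast {N : ℕ} [NeZero N] (j : ZMod N) : ((nrep N j : ℤ) : ZMod N) = j := by
  unfold nrep
  split
  · push_cast
    exact ZMod.natCast_zmod_val j
  · push_cast
    simp [ZMod.natCast_self, ZMod.natCast_zmod_val]

private lemma nrep_eq_of {N : ℕ} [NeZero N] {P t : ℤ} (hN2 : (N : ℤ) = 2 * P) {j : ZMod N}
    (h1 : -P < t) (h2 : t ≤ P) (hj : ((t : ℤ) : ZMod N) = j) : nrep N j = t := by
  obtain ⟨hb1, hb2⟩ := nrep_bounds hN2 j
  have hc : ((nrep N j - t : ℤ) : ZMod N) = 0 := by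
    push_cast
    rw [nrep_cast, hj]
    ring
  have hdvd : (N : ℤ) ∣ (nrep N j - t) := (ZMod.intCast_zmod_eq_zero_iff_dvd _ _).mp hc
  have habs : |nrep N j - t| < (N : ℤ) := by
    rw [abs_lt]
    omega
  have := Int.eq_zero_of_abs_lt_dvd hdvd habs
  omega

private lemma combine_bound {T1 T2 T3 c1 c2 c3 H : ℝ}
    (h1 : |T1| ≤ c1 * H) (h2 : |T2| ≤ c2 * H) (h3 : |T3| ≤ c3 * H) :
    |T1 + T2 + T3| ≤ (c1 + c2 + c3) * H := by
  calc |T1 + T2 + T3| ≤ |T1| + |T2| + |T3| := abs_add_three _ _ _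
    _ ≤ (c1 + c2 + c3) * H := by linarith

end AuxStmt12


set_option maxHeartbeats 1000000 in
/-- bound `max_k |(𝒟^{(m)} ĥ)_k| / (1 + ĥ_k) ≤ C_{h,m}` for the mollified
symbol `ĥ_k = θ̂(k)(k² - k_c²) + k_c²`, with `C_{h,m}` depending only on `m` and the
constants `C_{θ,j}`, independent of `k_c` and `L`. -/
theorem stmt_12 (Cθ : ℕ → ℝ) (m : ℕ) (hm : 1 ≤ m) :
    ∃ Chm : ℝ,
      ∀ (L : ℝ) (N : ℕ) [NeZero N], 1 ≤ L → Even N → 32 ≤ N → L / N ≤ 1 → 16 * m ≤ N →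
      ∀ θ : ℝ → ℝ, ContDiff ℝ (⊤ : ℕ∞) θ →
        (∀ k : ℝ, 0 ≤ θ k ∧ θ k ≤ 1) →
        (∀ k : ℝ, |k| ≤ Real.pi * N / L / 2 → θ k = 1) →
        (∀ k : ℝ, 3 / 4 * (Real.pi * N / L) ≤ |k| → θ k = 0) →
        (∀ (j : ℕ) (idx : ZMod N),
          |((DkR (2 * Real.pi / L))^[j] (fun p => θ (kval L N p))) idx| ≤ Cθ j) →
      ∀ idx : ZMod N,
        |((DkR (2 * Real.pi / L))^[m] (hsym L N θ)) idx| / (1 + hsym L N θ idx) ≤ Chm := by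
  obtain ⟨M, rfl⟩ : ∃ M, m = M + 1 := ⟨m - 1, by omega⟩
  refine ⟨64 / 9 * Cθ (M + 1) + (1 + 2 * Real.pi + 7 * ((M : ℝ) + 1) * Cθ M)
      + ((M : ℝ) + 1) ^ 2 * Cθ (M - 1), ?_⟩
  intro L N _inst hL hNeven hN32 hdx hmN θ hθsm hθ01 hθ1 hθ0 hθb idx
  set dk := 2 * Real.pi / L with hdk_def
  set kc := Real.pi * (N : ℝ) / L with hkc_def
  have hπ := Real.pi_gt_d6
  have hπ0 := Real.pi_pos
  have hL0 : (0 : ℝ) < L := by linarith only [hL]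
  have hN0 : 0 < N := by omega
  have hNR : (32 : ℝ) ≤ (N : ℝ) := by exact_mod_cast hN32
  have hM0 : (0 : ℝ) ≤ (M : ℝ) := Nat.cast_nonneg M
  have hdk0 : 0 < dk := by rw [hdk_def]; positivity
  have hdkne : dk ≠ 0 := ne_of_gt hdk0
  have hkc0 : 0 < kc := by rw [hkc_def]; positivity
  have hkc_dk : kc = (N : ℝ) / 2 * dk := by rw [hkc_def, hdk_def]; field_simp
  have hLN : L ≤ (N : ℝ) := by
    have h := (div_le_one (by positivity : (0 : ℝ) < (N : ℝ))).mp hdx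
    exact h
  have hkcπ : Real.pi ≤ kc := by
    rw [hkc_def, mul_div_assoc]
    nlinarith only [(one_le_div hL0).mpr hLN, hπ0]
  have hdk2π : dk ≤ 2 * Real.pi := by
    rw [hdk_def]
    exact div_le_self (by positivity) hL
  have hMN : (16 : ℝ) * ((M : ℝ) + 1) ≤ (N : ℝ) := by exact_mod_cast hmN
  have hmdk : ((M : ℝ) + 1) * dk ≤ kc / 8 := by
    have h := mul_nonneg (by linarith only [hMN] : (0 : ℝ) ≤ (N : ℝ) - 16 * ((M : ℝ) + 1))
      hdk0.le
    rw [hkc_dk]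
    linarith only [h]
  have hdkkc : dk ≤ kc := by
    have h1 : dk ≤ ((M : ℝ) + 1) * dk := by nlinarith only [mul_nonneg hM0 hdk0.le]
    linarith only [h1, hmdk, hkc0]
  obtain ⟨Pn, hPn⟩ := hNeven
  have hN2 : (N : ℤ) = 2 * (Pn : ℤ) := by
    have : N = 2 * Pn := by omega
    exact_mod_cast this
  have hPR : ((Pn : ℤ) : ℝ) * dk = kc := by
    have hcast : ((N : ℕ) : ℝ) = 2 * ((Pn : ℕ) : ℝ) := by exact_mod_cast hN2
    rw [hkc_dk]
    push_cast
    rw [hcast]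
    ring
  have hCθ : ∀ n : ℕ, 0 ≤ Cθ n := fun n => le_trans (abs_nonneg _) (hθb n idx)
  have hsym_eq : ∀ p : ZMod N, hsym L N θ p
      = θ (kval L N p) * ((kval L N p) ^ 2 - kc ^ 2) + kc ^ 2 := by
    intro p
    rw [hkc_def]
    rfl
  have hkb : ∀ p : ZMod N, |kval L N p| ≤ kc := by
    intro p
    obtain ⟨hb1, hb2⟩ := nrep_bounds hN2 p
    rw [kval_eq_nrep, ← hdk_def, abs_mul, abs_of_pos hdk0, ← hPR]
    have h1 : |(nrep N p : ℝ)| ≤ ((Pn : ℤ) : ℝ) := by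
      have h2 : |nrep N p| ≤ (Pn : ℤ) := by rw [abs_le]; omega
      calc |(nrep N p : ℝ)| = ((|nrep N p| : ℤ) : ℝ) := Int.cast_abs.symm
        _ ≤ ((Pn : ℤ) : ℝ) := by exact_mod_cast h2
    exact mul_le_mul_of_nonneg_right h1 hdk0.le
  have hhge : ∀ p : ZMod N, (kval L N p) ^ 2 ≤ hsym L N θ p := by
    intro p
    obtain ⟨ht0, ht1⟩ := hθ01 (kval L N p)
    have hk2 : (kval L N p) ^ 2 ≤ kc ^ 2 := by
      have h := abs_le.mp (hkb p)
      nlinarith only [h.1, h.2]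
    rw [hsym_eq]
    have key : 0 ≤ (1 - θ (kval L N p)) * (kc ^ 2 - (kval L N p) ^ 2) :=
      mul_nonneg (by linarith only [ht1]) (by linarith only [hk2])
    linarith only [key]
  have hh0 : ∀ p : ZMod N, 0 ≤ hsym L N θ p := fun p => le_trans (sq_nonneg _) (hhge p)
  have h1h : (0 : ℝ) < 1 + hsym L N θ idx := by linarith only [hh0 idx]
  rw [div_le_iff₀ h1h]
  by_cases hB : ∀ i ∈ Finset.range (M + 1 + 1), θ (kval L N (idx - (i : ZMod N))) = 0
  · -- Case B: θ vanishes on the whole window; the difference is exactly zero.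
    have hz : (DkR dk)^[M + 1] (hsym L N θ) idx = 0 := by
      rw [iterDkR_eq_sum hdkne]
      have hc : ∑ i ∈ Finset.range (M + 1 + 1), (-1 : ℝ) ^ i * ((M + 1).choose i : ℝ)
            * hsym L N θ (idx - (i : ZMod N))
          = (∑ i ∈ Finset.range (M + 1 + 1), (-1 : ℝ) ^ i * ((M + 1).choose i : ℝ)) * kc ^ 2 := by
        rw [Finset.sum_mul]
        refine Finset.sum_congr rfl fun i hi => ?_
        rw [hsym_eq, hB i hi]
        ring
      rw [hc, alt_sum_zero (Nat.succ_ne_zero M), zero_mul, zero_div]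
    rw [hz, abs_zero]
    refine mul_nonneg ?_ h1h.le
    have a1 : (0 : ℝ) ≤ 7 * ((M : ℝ) + 1) * Cθ M :=
      mul_nonneg (by positivity) (hCθ M)
    have a2 : (0 : ℝ) ≤ ((M : ℝ) + 1) ^ 2 * Cθ (M - 1) :=
      mul_nonneg (by positivity) (hCθ (M - 1))
    have a3 : (0 : ℝ) ≤ 64 / 9 * Cθ (M + 1) :=
      mul_nonneg (by norm_num) (hCθ (M + 1))
    linarith only [a1, a2, a3, hπ0]
  · -- Case A
    push_neg at hB
    obtain ⟨i0, hi0r, hi0⟩ := hB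
    have hi0M : i0 ≤ M + 1 := by have := Finset.mem_range.mp hi0r; omega
    have hKi0 : |kval L N (idx - (i0 : ZMod N))| < 3 / 4 * kc := by
      by_contra hcon
      push_neg at hcon
      exact hi0 (hθ0 _ hcon)
    set n0 : ℤ := nrep N (idx - (i0 : ZMod N)) with hn0_def
    have hn0R : |(n0 : ℝ)| * dk < 3 / 4 * kc := by
      rw [kval_eq_nrep, ← hdk_def, abs_mul, abs_of_pos hdk0, ← hn0_def] at hKi0
      exact hKi0
    have h8 : (8 : ℝ) * |(n0 : ℝ)| < 3 * (N : ℝ) := by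
      rw [hkc_dk] at hn0R
      nlinarith only [hn0R, hdk0, abs_nonneg ((n0 : ℝ))]
    have hn0b : 8 * |n0| < 3 * (N : ℤ) := by exact_mod_cast h8
    have habs1 : n0 ≤ |n0| := le_abs_self n0
    have habs2 : -|n0| ≤ n0 := neg_abs_le n0
    have hn1 : -(3 * (N : ℤ)) < 8 * n0 := by linarith
    have hn2 : 8 * n0 < 3 * (N : ℤ) := by linarith
    have hmNZ : (16 : ℤ) * ((M : ℤ) + 1) ≤ (N : ℤ) := by exact_mod_cast hmN
    have hkl : ∀ l : ℕ, l ≤ M + 1 → nrep N (idx - (l : ZMod N)) = n0 + i0 - l := by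
      intro l hl
      have hlZ : (l : ℤ) ≤ (M : ℤ) + 1 := by exact_mod_cast hl
      have hi0Z : (i0 : ℤ) ≤ (M : ℤ) + 1 := by exact_mod_cast hi0M
      have hl0 : (0 : ℤ) ≤ (l : ℤ) := Int.natCast_nonneg _
      have hi00 : (0 : ℤ) ≤ (i0 : ℤ) := Int.natCast_nonneg _
      refine nrep_eq_of hN2 (by omega) (by omega) ?_
      have hcast : ((n0 : ℤ) : ZMod N) = idx - (i0 : ZMod N) := by
        rw [hn0_def]; exact nrep_cast _
      push_cast
      rw [hcast]
      ring
    have hKl : ∀ l : ℕ, l ≤ M + 1 →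
        kval L N (idx - (l : ZMod N)) = ((n0 : ℝ) + (i0 : ℝ) - (l : ℝ)) * dk := by
      intro l hl
      rw [kval_eq_nrep, ← hdk_def, hkl l hl]
      push_cast
      ring
    have hK0 : kval L N idx = ((n0 : ℝ) + (i0 : ℝ)) * dk := by
      have h := hKl 0 (by omega)
      simpa using h
    have hKstep : ∀ l : ℕ, l ≤ M + 1 →
        kval L N (idx - (l : ZMod N)) = kval L N idx - (l : ℝ) * dk := by
      intro l hl
      rw [hKl l hl, hK0]
      ring
    set K := kval L N idx with hKdef
    -- the Leibniz-type identity
    have hstar : (DkR dk)^[M + 1] (hsym L N θ) idx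
        = ((kval L N idx) ^ 2 - kc ^ 2) * ((DkR dk)^[M + 1] (fun p => θ (kval L N p)) idx)
          + ((M : ℝ) + 1) * (2 * kval L N idx - dk)
              * ((DkR dk)^[M] (fun p => θ (kval L N p)) (idx - 1))
          + ((M : ℝ) + 1) * (M : ℝ)
              * ((DkR dk)^[M - 1] (fun p => θ (kval L N p)) (idx - 2)) := by
      have hS1 := iterDkR_eq_sum hdkne (fun p => θ (kval L N p)) (M + 1) idx
      have hS2 := iterDkR_eq_sum hdkne (fun p => θ (kval L N p)) M (idx - 1)
      have hSH := iterDkR_eq_sum hdkne (hsym L N θ) (M + 1) idx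
      have hmain : ∑ i ∈ Finset.range (M + 1 + 1), (-1 : ℝ) ^ i * ((M + 1).choose i : ℝ)
            * hsym L N θ (idx - (i : ZMod N))
          = ((kval L N idx) ^ 2 - kc ^ 2) * (∑ i ∈ Finset.range (M + 1 + 1),
                (-1 : ℝ) ^ i * ((M + 1).choose i : ℝ) * θ (kval L N (idx - (i : ZMod N))))
            - (2 * kval L N idx * dk - dk ^ 2) * (∑ i ∈ Finset.range (M + 1 + 1),
                (-1 : ℝ) ^ i * ((M + 1).choose i : ℝ)
                  * ((i : ℝ) * θ (kval L N (idx - (i : ZMod N)))))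
            + dk ^ 2 * (∑ i ∈ Finset.range (M + 1 + 1),
                (-1 : ℝ) ^ i * ((M + 1).choose i : ℝ)
                  * ((i : ℝ) * ((i : ℝ) - 1) * θ (kval L N (idx - (i : ZMod N)))))
            + (∑ i ∈ Finset.range (M + 1 + 1), (-1 : ℝ) ^ i * ((M + 1).choose i : ℝ))
                * kc ^ 2 := by
        rw [Finset.mul_sum, Finset.mul_sum, Finset.mul_sum, Finset.sum_mul,
          ← Finset.sum_sub_distrib, ← Finset.sum_add_distrib, ← Finset.sum_add_distrib]
        refine Finset.sum_congr rfl fun i hi => ?_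
        have hiM : i ≤ M + 1 := by have := Finset.mem_range.mp hi; omega
        rw [hsym_eq, hKstep i hiM]
        ring
      have hI1 : (∑ i ∈ Finset.range (M + 1 + 1),
            (-1 : ℝ) ^ i * ((M + 1).choose i : ℝ)
              * ((i : ℝ) * θ (kval L N (idx - (i : ZMod N)))))
          = -((M : ℝ) + 1) * ∑ r ∈ Finset.range (M + 1),
              (-1 : ℝ) ^ r * (M.choose r : ℝ) * θ (kval L N (idx - 1 - (r : ZMod N))) := by
        have h := alt_sum_mul_i (M := M) (fun i => θ (kval L N (idx - (i : ZMod N))))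
        have e : ∀ r : ℕ, idx - ((r + 1 : ℕ) : ZMod N) = idx - 1 - (r : ZMod N) := by
          intro r; push_cast; ring
        simp only [e] at h
        exact h
      have hI2 : (∑ i ∈ Finset.range (M + 1 + 1),
            (-1 : ℝ) ^ i * ((M + 1).choose i : ℝ)
              * ((i : ℝ) * ((i : ℝ) - 1) * θ (kval L N (idx - (i : ZMod N)))))
          = (((M : ℝ) + 1) * M) * ∑ r ∈ Finset.range M,
              (-1 : ℝ) ^ r * ((M - 1).choose r : ℝ) * θ (kval L N (idx - 2 - (r : ZMod N))) := by
        have h := alt_sum_mul_ii (M := M) (fun i => θ (kval L N (idx - (i : ZMod N))))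
        have e : ∀ r : ℕ, idx - ((r + 2 : ℕ) : ZMod N) = idx - 2 - (r : ZMod N) := by
          intro r; push_cast; ring
        simp only [e] at h
        exact h
      rw [hSH, hmain, alt_sum_zero (Nat.succ_ne_zero M), zero_mul, add_zero, hI1, hI2,
        hS1, hS2]
      rcases Nat.eq_zero_or_pos M with hM | hM
      · subst hM
        simp only [Finset.range_zero, Finset.sum_empty, mul_zero, zero_mul, Nat.cast_zero]
        field_simp
        ring
      · obtain ⟨M', rfl⟩ : ∃ M', M = M' + 1 := ⟨M - 1, by omega⟩
        have hS3 := iterDkR_eq_sum hdkne (fun p => θ (kval L N p)) M' (idx - 2)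
        simp only [Nat.add_sub_cancel]
        rw [hS3]
        field_simp
        ring
    rw [hstar]
    set Hs := hsym L N θ idx with hHdef
    set D1 := (DkR dk)^[M + 1] (fun p => θ (kval L N p)) idx with hD1def
    set D2 := (DkR dk)^[M] (fun p => θ (kval L N p)) (idx - 1) with hD2def
    set D3 := (DkR dk)^[M - 1] (fun p => θ (kval L N p)) (idx - 2) with hD3def
    have hD1 : |D1| ≤ Cθ (M + 1) := hθb (M + 1) idx
    have hD2 : |D2| ≤ Cθ M := hθb M (idx - 1)
    have hD3 : |D3| ≤ Cθ (M - 1) := hθb (M - 1) (idx - 2)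
    have habsD1 := abs_nonneg D1
    have habsD2 := abs_nonneg D2
    have habsD3 := abs_nonneg D3
    have hKh0 : K ^ 2 ≤ Hs := hhge idx
    have hH0 : 0 ≤ Hs := hh0 idx
    have hKb : |K| ≤ kc := hkb idx
    have hb3 : |((M : ℝ) + 1) * (M : ℝ) * D3|
        ≤ ((M : ℝ) + 1) ^ 2 * Cθ (M - 1) * (1 + Hs) := by
      rw [abs_mul, abs_mul, abs_of_nonneg (by positivity : (0 : ℝ) ≤ (M : ℝ) + 1),
        abs_of_nonneg hM0]
      have e1 : ((M : ℝ) + 1) * (M : ℝ) * |D3| ≤ ((M : ℝ) + 1) * (M : ℝ) * Cθ (M - 1) := by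
        have := mul_le_mul_of_nonneg_left hD3
          (mul_nonneg (by positivity : (0 : ℝ) ≤ (M : ℝ) + 1) hM0)
        linarith only [this]
      have e2 : ((M : ℝ) + 1) * (M : ℝ) * Cθ (M - 1) ≤ ((M : ℝ) + 1) ^ 2 * Cθ (M - 1) := by
        have := mul_nonneg (by positivity : (0 : ℝ) ≤ (M : ℝ) + 1) (hCθ (M - 1))
        nlinarith only [this]
      have e3 : ((M : ℝ) + 1) ^ 2 * Cθ (M - 1) ≤ ((M : ℝ) + 1) ^ 2 * Cθ (M - 1) * (1 + Hs) := by
        have := mul_nonneg (mul_nonneg (by positivity : (0 : ℝ) ≤ ((M : ℝ) + 1) ^ 2)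
          (hCθ (M - 1))) hH0
        nlinarith only [this]
      linarith only [e1, e2, e3]
    by_cases hA1 : |K| ≤ 3 / 8 * kc
    · -- window inside the region where θ = 1
      have hθ1w : ∀ l : ℕ, l ≤ M + 1 → θ (kval L N (idx - (l : ZMod N))) = 1 := by
        intro l hl
        apply hθ1
        rw [hKstep l hl]
        have hlb : (l : ℝ) ≤ (M : ℝ) + 1 := by exact_mod_cast hl
        have hl0 : (0 : ℝ) ≤ (l : ℝ) := Nat.cast_nonneg l
        rw [abs_le] at hA1 ⊢
        have hld : (l : ℝ) * dk ≤ ((M : ℝ) + 1) * dk := mul_le_mul_of_nonneg_right hlb hdk0.le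
        have hld0 : 0 ≤ (l : ℝ) * dk := mul_nonneg hl0 hdk0.le
        constructor
        · linarith only [hA1.1, hld, hmdk]
        · linarith only [hA1.2, hld0, hkc0]
      have hz1 : D1 = 0 := by
        rw [hD1def, iterDkR_eq_sum hdkne]
        have hcg : ∀ i ∈ Finset.range (M + 1 + 1),
            (-1 : ℝ) ^ i * ((M + 1).choose i : ℝ)
              * (fun p => θ (kval L N p)) (idx - (i : ZMod N))
            = (-1 : ℝ) ^ i * ((M + 1).choose i : ℝ) := by
          intro i hi
          have him : i ≤ M + 1 := by have := Finset.mem_range.mp hi; omega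
          simp only [hθ1w i him, mul_one]
        rw [Finset.sum_congr rfl hcg, alt_sum_zero (Nat.succ_ne_zero M), zero_div]
      have hb1 : |(K ^ 2 - kc ^ 2) * D1| ≤ 64 / 9 * Cθ (M + 1) * (1 + Hs) := by
        rw [hz1, mul_zero, abs_zero]
        have := mul_nonneg (hCθ (M + 1)) (by linarith only [hH0] : (0 : ℝ) ≤ 1 + Hs)
        linarith only [this]
      have hb2 : |((M : ℝ) + 1) * (2 * K - dk) * D2|
          ≤ (1 + 2 * Real.pi + 7 * ((M : ℝ) + 1) * Cθ M) * (1 + Hs) := by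
        rcases Nat.eq_zero_or_pos M with hM | hM
        · have hD2v : D2 = θ (kval L N (idx - ((1 : ℕ) : ZMod N))) := by
            rw [hD2def, hM]
            simp only [Function.iterate_zero_apply]
            norm_num
          rw [hD2v, hθ1w 1 (by omega), hM]
          simp only [Nat.cast_zero]
          rw [abs_le]
          have h2k1 : 2 * K ≤ 1 + K ^ 2 := by nlinarith only [sq_nonneg (K - 1)]
          have h2k2 : -(1 + K ^ 2) ≤ 2 * K := by nlinarith only [sq_nonneg (K + 1)]
          have hcH : 0 ≤ Cθ 0 * (1 + Hs) :=
            mul_nonneg (hCθ 0) (by linarith only [hH0])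
          have hπH : 0 ≤ Real.pi * Hs := mul_nonneg hπ0.le hH0
          constructor
          · linarith only [h2k2, hKh0, hdk2π, hH0, hcH, hπH, hπ0, hdk0]
          · linarith only [h2k1, hKh0, hdk0, hH0, hcH, hπH, hπ0]
        · have hz2 : D2 = 0 := by
            rw [hD2def, iterDkR_eq_sum hdkne]
            have hcg : ∀ r ∈ Finset.range (M + 1),
                (-1 : ℝ) ^ r * (M.choose r : ℝ)
                  * (fun p => θ (kval L N p)) (idx - 1 - (r : ZMod N))
                = (-1 : ℝ) ^ r * (M.choose r : ℝ) := by
              intro r hr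
              have hrm : r + 1 ≤ M + 1 := by have := Finset.mem_range.mp hr; omega
              have e : idx - 1 - (r : ZMod N) = idx - ((r + 1 : ℕ) : ZMod N) := by
                push_cast; ring
              simp only [e, hθ1w (r + 1) hrm, mul_one]
            rw [Finset.sum_congr rfl hcg, alt_sum_zero (by omega : M ≠ 0), zero_div]
          rw [hz2, mul_zero, abs_zero]
          have a1 := mul_nonneg (mul_nonneg (mul_nonneg (by norm_num : (0 : ℝ) ≤ 7)
            (by positivity : (0 : ℝ) ≤ (M : ℝ) + 1)) (hCθ M))
            (by linarith only [hH0] : (0 : ℝ) ≤ 1 + Hs)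
          have a2 := mul_nonneg hπ0.le (by linarith only [hH0] : (0 : ℝ) ≤ 1 + Hs)
          linarith only [a1, a2, hH0]
      exact combine_bound hb1 hb2 hb3
    · -- |K| large: 1 + ĥ ≳ k_c²
      push_neg at hA1
      have hKsq : 9 / 64 * kc ^ 2 ≤ K ^ 2 := by
        have h := mul_le_mul hA1.le hA1.le (by positivity) (abs_nonneg K)
        have h2 := sq_abs K
        nlinarith only [h, h2]
      have hKh : 9 / 64 * kc ^ 2 ≤ 1 + Hs := by linarith only [hKsq, hKh0]
      have hq : |K ^ 2 - kc ^ 2| ≤ kc ^ 2 := by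
        have h := abs_le.mp hKb
        have hK2 : K ^ 2 ≤ kc ^ 2 := by nlinarith only [h.1, h.2]
        rw [abs_le]
        constructor
        · linarith only [hK2, sq_nonneg K]
        · linarith only [hK2, sq_nonneg K]
      have hb1 : |(K ^ 2 - kc ^ 2) * D1| ≤ 64 / 9 * Cθ (M + 1) * (1 + Hs) := by
        rw [abs_mul]
        have e1 := mul_le_mul_of_nonneg_right hq habsD1
        have e2 := mul_le_mul_of_nonneg_left hD1 (sq_nonneg kc)
        have e3 := mul_le_mul_of_nonneg_left hKh (hCθ (M + 1))
        linarith only [e1, e2, e3]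
      have h2K : |2 * K - dk| ≤ 3 * kc := by
        have h := abs_le.mp hKb
        rw [abs_le]
        constructor
        · linarith only [h.1, hdkkc, hdk0]
        · linarith only [h.2, hdk0, hkc0]
      have hkc3 : (3 : ℝ) ≤ 63 / 64 * kc := by linarith only [hkcπ, hπ]
      have hb2 : |((M : ℝ) + 1) * (2 * K - dk) * D2|
          ≤ (1 + 2 * Real.pi + 7 * ((M : ℝ) + 1) * Cθ M) * (1 + Hs) := by
        rw [abs_mul, abs_mul, abs_of_nonneg (by positivity : (0 : ℝ) ≤ (M : ℝ) + 1)]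
        have e1 : |2 * K - dk| * |D2| ≤ (3 * kc) * Cθ M :=
          mul_le_mul h2K hD2 habsD2 (by positivity)
        have e2 : 3 * kc * Cθ M ≤ 7 * Cθ M * (9 / 64 * kc ^ 2) := by
          have := mul_le_mul_of_nonneg_left hkc3 (mul_nonneg (hCθ M) hkc0.le)
          linarith only [this]
        have e3 : 7 * Cθ M * (9 / 64 * kc ^ 2) ≤ 7 * Cθ M * (1 + Hs) :=
          mul_le_mul_of_nonneg_left hKh (by linarith only [hCθ M])
        have f1 := mul_le_mul_of_nonneg_left e1 (by positivity : (0 : ℝ) ≤ (M : ℝ) + 1)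
        have f2 := mul_le_mul_of_nonneg_left e2 (by positivity : (0 : ℝ) ≤ (M : ℝ) + 1)
        have f3 := mul_le_mul_of_nonneg_left e3 (by positivity : (0 : ℝ) ≤ (M : ℝ) + 1)
        have g1 : (0 : ℝ) ≤ (1 + 2 * Real.pi) * (1 + Hs) :=
          mul_nonneg (by positivity) (by linarith only [hH0])
        linarith only [f1, f2, f3, g1]
      exact combine_bound hb1 hb2 hb3
end

section
/- Let L ≥ 1, N a positive even integer, Δx = L/N ≤ 1, k_c = π/Δx, and let θ̂ : ℝ → ℝ satisfy 0 ≤ θ̂ ≤ 1 and θ̂(k) = 0 for |k| ≥ (3/4)k_c. Define ĥ_k = θ̂(k)(k² − k_c²) + k_c² for k ∈ 𝒦. Then ĥ_k ≥ k² for every k ∈ 𝒦, and consequently Δk Σ_{k∈𝒦} 1/(1 + ĥ_k)² ≤ ∫_{−∞}^{∞} dk/(1+k²)² + 2π; in particular the Fourier-space norm of ĝ_k = −1/(1+ĥ_k) satisfies ‖ĝ‖_{L²(𝒦)}² ≤ π/2 + 2π, a bound independent of L and k_c. -/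
open scoped BigOperators Real
open MeasureTheory

/-!
On the grid `|k| ≤ k_c`, so `ĥ_k - k² = (1 - θ̂(k)) (k_c² - k²) ≥ 0`. Writing `k = n Δk`, where `n`
is `ZMod.valMinAbs` of the index, the sum of `1/(1 + ĥ_k)²` is bounded by the sum of `g(n Δk)` over
`|n| ≤ N/2`, with `g(x) = 1/(1 + x²)²`. Since `g` is even and decreasing on `[0, ∞)`, the term at
`n ≥ 1` is at most `∫_{(n-1)Δk}^{nΔk} g / Δk`, so the Riemann sum is at most `Δk g(0) + ∫ g`, and
`Δk = 2π/L ≤ 2π`. The integral is `π/2`, from the antiderivative `(x/(1 + x²) + arctan x)/2`.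
-/

open Set Filter Topology

lemma tendsto_div_one_add_sq_cocompact :
    Tendsto (fun x : ℝ => x / (1 + x ^ 2)) (cocompact ℝ) (𝓝 0) := by
  refine squeeze_zero_norm' (a := fun x => ‖x‖⁻¹) ?_
    tendsto_norm_cocompact_atTop.inv_tendsto_atTop
  filter_upwards [tendsto_norm_cocompact_atTop.eventually_gt_atTop 0] with x hx
  rw [Real.norm_eq_abs] at hx
  rw [norm_div, Real.norm_of_nonneg (by positivity : (0:ℝ) ≤ 1 + x ^ 2), Real.norm_eq_abs,
    ← sq_abs x, div_le_iff₀ (by positivity)]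
  field_simp
  nlinarith

lemma hasDerivAt_antideriv_one_div_one_add_sq_sq (x : ℝ) :
    HasDerivAt (fun x : ℝ => (x / (1 + x ^ 2) + Real.arctan x) / 2) (1 / (1 + x ^ 2) ^ 2) x := by
  have hd : HasDerivAt (fun x : ℝ => 1 + x ^ 2) (2 * x) x := by
    simpa using (hasDerivAt_pow 2 x).const_add 1
  refine ((((hasDerivAt_id' x).div hd (by positivity)).add
    (Real.hasDerivAt_arctan x)).div_const 2).congr_deriv ?_
  field_simp
  ring

lemma one_div_one_add_sq_sq_le (x : ℝ) : 1 / (1 + x ^ 2) ^ 2 ≤ (1 + x ^ 2)⁻¹ := by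
  rw [one_div]
  exact inv_anti₀ (by positivity) (by nlinarith [sq_nonneg x])

lemma integrable_one_div_one_add_sq_sq : Integrable fun x : ℝ => 1 / (1 + x ^ 2) ^ 2 :=
  integrable_inv_one_add_sq.mono'
    (continuous_const.div (by fun_prop) fun x => by positivity).aestronglyMeasurable
    (.of_forall fun x => by
      rw [Real.norm_of_nonneg (by positivity)]
      exact one_div_one_add_sq_sq_le x)

lemma integral_one_div_one_add_sq_sq : ∫ x : ℝ, 1 / (1 + x ^ 2) ^ 2 = π / 2 := by
  have hbot := ((tendsto_div_one_add_sq_cocompact.mono_left atBot_le_cocompact).add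
    (Real.tendsto_arctan_atBot.mono_right nhdsWithin_le_nhds)).div_const 2
  have htop := ((tendsto_div_one_add_sq_cocompact.mono_left atTop_le_cocompact).add
    (Real.tendsto_arctan_atTop.mono_right nhdsWithin_le_nhds)).div_const 2
  rw [integral_of_hasDerivAt_of_tendsto hasDerivAt_antideriv_one_div_one_add_sq_sq
    integrable_one_div_one_add_sq_sq hbot htop]
  ring

lemma antitoneOn_one_div_one_add_sq_sq : AntitoneOn (fun x : ℝ => 1 / (1 + x ^ 2) ^ 2) (Ici 0) :=
  fun a ha b _ hab => by
    dsimp only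
    gcongr

lemma mul_sum_range_le_intervalIntegral {g : ℝ → ℝ} (hg : AntitoneOn g (Ici 0)) {h : ℝ}
    (hh : 0 < h) (M : ℕ) :
    h * ∑ i ∈ Finset.range M, g ((i + 1) * h) ≤ ∫ x in 0..M * h, g x := by
  have hscaled : AntitoneOn (fun x => g (x * h)) (Icc 0 (0 + M)) := fun a ha b _ hab =>
    hg (mul_nonneg ha.1 hh.le) (mul_nonneg (ha.1.trans hab) hh.le) (by gcongr)
  have := hscaled.sum_le_integral
  rw [intervalIntegral.integral_comp_mul_right g hh.ne'] at this
  simp only [zero_add, zero_mul, Nat.cast_add, Nat.cast_one, smul_eq_mul] at this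
  rwa [← le_inv_mul_iff₀ hh]

lemma intervalIntegral_neg_self_of_even {g : ℝ → ℝ} (heven : ∀ x, g (-x) = g x)
    (hint : Integrable g) (a : ℝ) :
    ∫ x in -a..a, g x = 2 * ∫ x in 0..a, g x := by
  have hleft : ∫ x in -a..0, g x = ∫ x in 0..a, g x := by
    simpa [heven] using (intervalIntegral.integral_comp_neg (a := 0) (b := a) g).symm
  rw [← intervalIntegral.integral_add_adjacent_intervals (b := 0) hint.intervalIntegrable
    hint.intervalIntegrable, hleft]
  ring

lemma sum_Icc_neg_self_of_even {F : ℤ → ℝ} (heven : ∀ n, F (-n) = F n) (M : ℕ) :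
    ∑ n ∈ Finset.Icc (-M : ℤ) M, F n = F 0 + 2 * ∑ i ∈ Finset.range M, F (i + 1) := by
  induction M with
  | zero => simp
  | succ M ih =>
    have hIcc : Finset.Icc (-(M + 1 : ℕ) : ℤ) (M + 1 : ℕ) =
        insert (-(M + 1 : ℤ)) (insert (M + 1 : ℤ) (Finset.Icc (-M : ℤ) M)) := by
      ext n; simp only [Finset.mem_Icc, Finset.mem_insert]; omega
    rw [hIcc, Finset.sum_insert (by simp; omega), Finset.sum_insert (by simp), ih,
      Finset.sum_range_succ, heven]
    ring

theorem mul_sum_Icc_le_integral {g : ℝ → ℝ} (heven : ∀ x, g (-x) = g x)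
    (hanti : AntitoneOn g (Ici 0)) (hnonneg : ∀ x, 0 ≤ g x) (hint : Integrable g) {h : ℝ}
    (hh : 0 < h) (M : ℕ) :
    h * ∑ n ∈ Finset.Icc (-M : ℤ) M, g (n * h) ≤ h * g 0 + ∫ x, g x := by
  have htail : 2 * (h * ∑ i ∈ Finset.range M, g ((i + 1) * h)) ≤ ∫ x, g x := calc
    _ ≤ 2 * ∫ x in 0..M * h, g x := by
      gcongr
      exact mul_sum_range_le_intervalIntegral hanti hh M
    _ = ∫ x in -(M * h)..M * h, g x := (intervalIntegral_neg_self_of_even heven hint _).symm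
    _ ≤ ∫ x, g x := by
      rw [intervalIntegral.integral_of_le (by linarith [mul_nonneg M.cast_nonneg hh.le])]
      exact setIntegral_le_integral hint (.of_forall hnonneg)
  rw [sum_Icc_neg_self_of_even (F := fun n : ℤ => g (n * h)) (fun n => by simp [heven])]
  push_cast
  simp only [zero_mul]
  linarith

lemma kval_eq_valMinAbs_mul (L : ℝ) {N : ℕ} [NeZero N] (j : ZMod N) :
    kval L N j = j.valMinAbs * (2 * π / L) := by
  rw [kval, ZMod.valMinAbs_def_pos]
  have hcond : (j.val : ℤ) ≤ (N : ℤ) / 2 ↔ j.val ≤ N / 2 := by omega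
  simp only [hcond]
  split_ifs <;> push_cast <;> rfl

lemma sq_kval_le (L : ℝ) {N : ℕ} [NeZero N] (j : ZMod N) :
    kval L N j ^ 2 ≤ (π * N / L) ^ 2 := by
  obtain ⟨hlo, hhi⟩ := j.valMinAbs_mem_Ioc
  have hsq : ((j.valMinAbs : ℝ) * 2) ^ 2 ≤ (N : ℝ) ^ 2 := by
    exact_mod_cast sq_le_sq' (by omega) hhi
  rw [kval_eq_valMinAbs_mul]
  calc _ = (j.valMinAbs * 2 : ℝ) ^ 2 * (π / L) ^ 2 := by ring
    _ ≤ (N : ℝ) ^ 2 * (π / L) ^ 2 := by gcongr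
    _ = _ := by ring

lemma sum_valMinAbs_le_sum_Icc {N : ℕ} [NeZero N] {F : ℤ → ℝ} (hF : ∀ n, 0 ≤ F n) :
    ∑ j : ZMod N, F j.valMinAbs ≤ ∑ n ∈ Finset.Icc (-(N / 2 : ℕ) : ℤ) (N / 2 : ℕ), F n := by
  rw [← Finset.sum_image ZMod.injective_valMinAbs.injOn]
  refine Finset.sum_le_sum_of_subset_of_nonneg (fun n hn => ?_) fun n _ _ => hF n
  obtain ⟨j, -, rfl⟩ := Finset.mem_image.mp hn
  obtain ⟨hlo, hhi⟩ := j.valMinAbs_mem_Ioc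
  rw [Finset.mem_Icc]
  omega

lemma sq_kval_le_hsym (L : ℝ) {N : ℕ} [NeZero N] {θ : ℝ → ℝ} (j : ZMod N)
    (hθ : θ (kval L N j) ≤ 1) : kval L N j ^ 2 ≤ hsym L N θ j := by
  have hkc := sq_kval_le L j
  rw [hsym]
  nlinarith [mul_nonneg (sub_nonneg.2 hθ) (sub_nonneg.2 hkc)]

lemma sq_wnorm {N : ℕ} [NeZero N] {w : ℝ} (hw : 0 ≤ w) (f : ZMod N → ℂ) :
    wnorm w f ^ 2 = w * ∑ i, ‖f i‖ ^ 2 :=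
  Real.sq_sqrt (by positivity)

lemma norm_neg_one_div_one_add_ofReal_sq (x : ℝ) :
    ‖-1 / (1 + (x : ℂ))‖ ^ 2 = 1 / (1 + x) ^ 2 := by
  rw [norm_div, norm_neg, norm_one, div_pow, one_pow, ← Complex.ofReal_one, ← Complex.ofReal_add,
    Complex.norm_real, Real.norm_eq_abs, sq_abs]

theorem stmt_14_general (L : ℝ) (N : ℕ) [NeZero N] (hL : 1 ≤ L)
    (θ : ℝ → ℝ) (hθ01 : ∀ k : ℝ, 0 ≤ θ k ∧ θ k ≤ 1) :
    (∀ j : ZMod N, kval L N j ^ 2 ≤ hsym L N θ j) ∧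
    2 * Real.pi / L * ∑ j : ZMod N, 1 / (1 + hsym L N θ j) ^ 2 ≤
      (∫ k : ℝ, 1 / (1 + k ^ 2) ^ 2) + 2 * Real.pi ∧
    wnorm (2 * Real.pi / L) (fun j => -1 / (1 + ((hsym L N θ j : ℝ) : ℂ))) ^ 2 ≤
      Real.pi / 2 + 2 * Real.pi := by
  set dk := 2 * π / L
  have hdk : 0 < dk := by positivity
  have hkh (j : ZMod N) : kval L N j ^ 2 ≤ hsym L N θ j := sq_kval_le_hsym L j (hθ01 _).2
  have hsum : dk * ∑ j : ZMod N, 1 / (1 + hsym L N θ j) ^ 2 ≤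
      (∫ k : ℝ, 1 / (1 + k ^ 2) ^ 2) + 2 * π := calc
    _ ≤ dk * ∑ j : ZMod N, 1 / (1 + (j.valMinAbs * dk) ^ 2) ^ 2 := by
      gcongr with j
      rw [← kval_eq_valMinAbs_mul]
      exact hkh j
    _ ≤ dk * ∑ n ∈ Finset.Icc (-(N / 2 : ℕ) : ℤ) (N / 2 : ℕ), 1 / (1 + (n * dk) ^ 2) ^ 2 := by
      gcongr
      exact sum_valMinAbs_le_sum_Icc (F := fun n : ℤ => 1 / (1 + (n * dk) ^ 2) ^ 2)
        fun n => by positivity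
    _ ≤ dk * (1 / (1 + 0 ^ 2) ^ 2) + ∫ k : ℝ, 1 / (1 + k ^ 2) ^ 2 :=
      mul_sum_Icc_le_integral (fun x => by simp) antitoneOn_one_div_one_add_sq_sq
        (fun x => by positivity) integrable_one_div_one_add_sq_sq hdk _
    _ ≤ _ := by
      have : dk ≤ 2 * π := div_le_self (by positivity) hL
      norm_num
      linarith
  refine ⟨hkh, hsum, ?_⟩
  rw [sq_wnorm hdk.le]
  simp only [norm_neg_one_div_one_add_ofReal_sq]
  linarith [integral_one_div_one_add_sq_sq]

/-- `ĥ_k ≥ k²` on the Fourier grid, the sum bound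
`Δk Σ_k 1/(1+ĥ_k)² ≤ ∫ 1/(1+k²)² dk + 2π`, and `‖ĝ‖²_{L²(𝒦)} ≤ π/2 + 2π`. -/
theorem stmt_14 (L : ℝ) (N : ℕ) [NeZero N] (hL : 1 ≤ L) (hN : Even N) (hdx : L / N ≤ 1)
    (θ : ℝ → ℝ) (hθ01 : ∀ k : ℝ, 0 ≤ θ k ∧ θ k ≤ 1)
    (hθ0 : ∀ k : ℝ, 3 / 4 * (Real.pi * N / L) ≤ |k| → θ k = 0) :
    (∀ j : ZMod N, kval L N j ^ 2 ≤ hsym L N θ j) ∧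
    2 * Real.pi / L * ∑ j : ZMod N, 1 / (1 + hsym L N θ j) ^ 2 ≤
      (∫ k : ℝ, 1 / (1 + k ^ 2) ^ 2) + 2 * Real.pi ∧
    wnorm (2 * Real.pi / L) (fun j => -1 / (1 + ((hsym L N θ j : ℝ) : ℂ))) ^ 2 ≤
      Real.pi / 2 + 2 * Real.pi :=
  stmt_14_general L N hL θ hθ01
end
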